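/- Let G = (V,E) be a locally finite, connected graph and Γ a subgroup of the automorphism group of G acting quasi-transitively on V (finitely many orbits), with orbit representatives o_1,…,o_L. For indices i,j and q > 0 let N_{i,j,q} = { y ∈ Γ o_j : y ~ o_i and Δ(o_i, y) = q }. Then for all i,j and q > 0: #N_{i,j,q} = q^{−1}·#N_{j,i,q^{−1}}; in particular, N_{i,j,q} is nonempty if and only if N_{j,i,q^{−1}} is nonempty. -/
import Mathlib


open SimpleGraph

attribute [local instance] Classical.propDecidable

/-- The modular function `Δ(x,y) = |Γ_y x| / |Γ_x y|` of a group `Γ` acting on `V`. -/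
noncomputable def modular {V : Type*} (Γ : Type*) [Group Γ] [MulAction Γ V] (x y : V) : ℝ :=
  ((MulAction.orbit (MulAction.stabilizer Γ y) x).ncard : ℝ) /
    ((MulAction.orbit (MulAction.stabilizer Γ x) y).ncard : ℝ)

/-- The set `N_{i,j,q} = {y ∈ Γo_j : y ~ o_i, Δ(o_i,y) = q}`, as a subset of the (finite)
neighbourhood of `o_i`. -/
noncomputable def Nset {V : Type*} [DecidableEq V] (G : SimpleGraph V) [G.LocallyFinite]
    (Γ : Type*) [Group Γ] [MulAction Γ V] {L : ℕ} (o : Fin L → V) (i j : Fin L) (q : ℝ) :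
    Finset V :=
  (G.neighborFinset (o i)).filter
    (fun y => y ∈ MulAction.orbit Γ (o j) ∧ modular Γ (o i) y = q)

section aux
variable {V : Type*} {Γ : Type*} [Group Γ] [MulAction Γ V]

lemma aux_orbit_smul (γ : Γ) (u v : V) :
    MulAction.orbit (MulAction.stabilizer Γ (γ • u)) (γ • v) =
      (fun z => γ • z) '' MulAction.orbit (MulAction.stabilizer Γ u) v := by
  ext z
  constructor
  · rintro ⟨⟨δ, hδ⟩, rfl⟩
    rw [MulAction.mem_stabilizer_iff] at hδ
    refine ⟨(γ⁻¹ * δ * γ) • v, ⟨⟨γ⁻¹ * δ * γ, ?_⟩, rfl⟩, ?_⟩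
    · rw [MulAction.mem_stabilizer_iff]
      have h1 : (γ⁻¹ * δ * γ) • u = γ⁻¹ • (δ • (γ • u)) := by
        simp [mul_smul]
      rw [h1, hδ]; simp
    · show γ • (γ⁻¹ * δ * γ) • v = _
      simp [mul_smul]
  · rintro ⟨z', ⟨⟨ε, hε⟩, rfl⟩, rfl⟩
    rw [MulAction.mem_stabilizer_iff] at hε
    refine ⟨⟨γ * ε * γ⁻¹, ?_⟩, ?_⟩
    · rw [MulAction.mem_stabilizer_iff]
      simp [mul_smul, hε]
    · show (γ * ε * γ⁻¹) • (γ • v) = _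
      simp [mul_smul]

lemma aux_ncard_smul (γ : Γ) (u v : V) :
    (MulAction.orbit (MulAction.stabilizer Γ (γ • u)) (γ • v)).ncard =
      (MulAction.orbit (MulAction.stabilizer Γ u) v).ncard := by
  rw [aux_orbit_smul, Set.ncard_image_of_injective _ (MulAction.injective γ)]

lemma modular_smul (γ : Γ) (u v : V) : modular Γ (γ • u) (γ • v) = modular Γ u v := by
  unfold modular; rw [aux_ncard_smul, aux_ncard_smul]

lemma modular_symm (u v : V) : modular Γ v u = (modular Γ u v)⁻¹ := by
  unfold modular; rw [inv_div]

lemma fiber1 (X Y W : V) (σ : Γ) (hσ : σ • Y = W) :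
    {b : V | ∃ γ : Γ, γ • X = b ∧ γ • Y = W} =
      MulAction.orbit (MulAction.stabilizer Γ W) (σ • X) := by
  ext b
  constructor
  · rintro ⟨γ, rfl, hγ⟩
    refine ⟨⟨γ * σ⁻¹, ?_⟩, ?_⟩
    · rw [MulAction.mem_stabilizer_iff]
      have h2 : σ⁻¹ • W = Y := by rw [← hσ]; simp
      rw [mul_smul, h2, hγ]
    · show (γ * σ⁻¹) • (σ • X) = γ • X
      rw [mul_smul]; simp
  · rintro ⟨⟨δ, hδ⟩, rfl⟩
    rw [MulAction.mem_stabilizer_iff] at hδ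
    refine ⟨δ * σ, ?_, ?_⟩
    · show (δ * σ) • X = _
      rw [mul_smul]; rfl
    · rw [mul_smul, hσ, hδ]

end aux

/-- Let `G` be a locally finite, connected graph and `Γ` a group acting on it
by automorphisms, quasi-transitively, with orbit representatives `o_1,…,o_L`. Then for all `i,j`
and `q > 0`: `#N_{i,j,q} = q⁻¹·#N_{j,i,q⁻¹}`; in particular `N_{i,j,q}` is nonempty iff
`N_{j,i,q⁻¹}` is nonempty. -/
theorem stmt18 {V : Type*} [DecidableEq V] (G : SimpleGraph V) [G.LocallyFinite]
    (hconn : G.Connected)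
    (Γ : Type*) [Group Γ] [MulAction Γ V]
    (hauto : ∀ (γ : Γ) (u v : V), G.Adj (γ • u) (γ • v) ↔ G.Adj u v)
    (L : ℕ) (o : Fin L → V)
    (hcover : ∀ x : V, ∃ i : Fin L, x ∈ MulAction.orbit Γ (o i))
    (hdistinct : ∀ i j : Fin L, o i ∈ MulAction.orbit Γ (o j) → i = j)
    (i j : Fin L) (q : ℝ) (hq : 0 < q) :
    (((Nset G Γ o i j q).card : ℝ) = q⁻¹ * ((Nset G Γ o j i q⁻¹).card : ℝ)) ∧
    ((Nset G Γ o i j q).Nonempty ↔ (Nset G Γ o j i q⁻¹).Nonempty) := by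
  classical
  set x := o i with hx
  set w := o j with hw
  have hq' : q ≠ 0 := ne_of_gt hq
  set R : V → V → Prop := fun y y' => ∃ γ : Γ, γ • x = y' ∧ γ • y = w with hRdef
  set A := Nset G Γ o i j q with hA
  set B := Nset G Γ o j i q⁻¹ with hB
  have hmemA : ∀ y, y ∈ A ↔ G.Adj x y ∧ y ∈ MulAction.orbit Γ w ∧ modular Γ x y = q := by
    intro y
    simp [hA, Nset, SimpleGraph.mem_neighborFinset, ← hx, ← hw]
  have hmemB : ∀ y', y' ∈ B ↔ G.Adj w y' ∧ y' ∈ MulAction.orbit Γ x ∧ modular Γ w y' = q⁻¹ := by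
    intro y'
    simp [hB, Nset, SimpleGraph.mem_neighborFinset, ← hx, ← hw]
  set f : V → ℝ := fun y => ((MulAction.orbit (MulAction.stabilizer Γ y) x).ncard : ℝ)⁻¹ with hf
  have h1 : ∑ y ∈ A, ∑ y' ∈ B, (if R y y' then f y else 0) = (A.card : ℝ) := by
    rw [show ((A.card : ℝ)) = ∑ y ∈ A, (1 : ℝ) by simp]
    refine Finset.sum_congr rfl ?_
    intro y hy
    rw [hmemA y] at hy
    obtain ⟨hadj, ⟨τ, hτ⟩, hmod⟩ := hy
    have hσ : τ⁻¹ • y = w := by rw [← hτ]; simp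
    set a := (MulAction.orbit (MulAction.stabilizer Γ y) x).ncard with ha
    set b := (MulAction.orbit (MulAction.stabilizer Γ x) y).ncard with hb
    have hmod' : (a : ℝ) / b = q := hmod
    have hbne : (b : ℝ) ≠ 0 := by
      intro h; rw [h, div_zero] at hmod'; exact hq' hmod'.symm
    have hane : (a : ℝ) ≠ 0 := by
      intro h; rw [h, zero_div] at hmod'; exact hq' hmod'.symm
    have hset : (↑(B.filter (fun y' => R y y')) : Set V) =
        MulAction.orbit (MulAction.stabilizer Γ w) (τ⁻¹ • x) := by
      rw [← fiber1 x y w τ⁻¹ hσ]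
      ext y'
      simp only [Finset.coe_filter, Set.mem_setOf_eq]
      constructor
      · rintro ⟨_, h⟩; exact h
      · intro h
        refine ⟨?_, h⟩
        obtain ⟨γ, hγx, hγy⟩ := h
        rw [hmemB]
        refine ⟨?_, ?_, ?_⟩
        · rw [← hγx, ← hγy, hauto]; exact hadj.symm
        · exact MulAction.mem_orbit_iff.mpr ⟨γ, hγx⟩
        · rw [← hγx, ← hγy, modular_smul, modular_symm, hmod]
    have hcard : (B.filter (fun y' => R y y')).card = a := by
      have h2 := Set.ncard_coe_finset (B.filter (fun y' => R y y'))
      rw [hset] at h2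
      have h3 := aux_ncard_smul (Γ := Γ) τ⁻¹ y x
      rw [hσ] at h3
      rw [← h2, h3]
    calc ∑ y' ∈ B, (if R y y' then f y else 0)
        = ∑ y' ∈ B.filter (fun y' => R y y'), f y := (Finset.sum_filter _ _).symm
      _ = (B.filter (fun y' => R y y')).card • f y := Finset.sum_const _
      _ = (a : ℝ) * (a : ℝ)⁻¹ := by rw [hcard, nsmul_eq_mul]
      _ = 1 := mul_inv_cancel₀ hane
  have h2 : ∑ y' ∈ B, ∑ y ∈ A, (if R y y' then f y else 0) = q⁻¹ * (B.card : ℝ) := by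
    rw [show q⁻¹ * (B.card : ℝ) = ∑ y' ∈ B, q⁻¹ by rw [Finset.sum_const, nsmul_eq_mul, mul_comm]]
    refine Finset.sum_congr rfl ?_
    intro y' hy'
    rw [hmemB y'] at hy'
    obtain ⟨hadj, ⟨τ, hτ⟩, hmod⟩ := hy'
    have hρ : τ⁻¹ • y' = x := by rw [← hτ]; simp
    set a' := (MulAction.orbit (MulAction.stabilizer Γ y') w).ncard with ha'
    set b' := (MulAction.orbit (MulAction.stabilizer Γ w) y').ncard with hb'
    have hmod' : (a' : ℝ) / b' = q⁻¹ := hmod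
    have hqinv : q⁻¹ ≠ 0 := inv_ne_zero hq'
    have hbne : (b' : ℝ) ≠ 0 := by
      intro h; rw [h, div_zero] at hmod'; exact hqinv hmod'.symm
    have hane : (a' : ℝ) ≠ 0 := by
      intro h; rw [h, zero_div] at hmod'; exact hqinv hmod'.symm
    have hRiff : ∀ y, R y y' ↔ (∃ δ : Γ, δ • w = y ∧ δ • y' = x) := by
      intro y
      constructor
      · rintro ⟨γ, hγx, hγy⟩
        exact ⟨γ⁻¹, by rw [← hγy]; simp, by rw [← hγx]; simp⟩
      · rintro ⟨δ, hδw, hδy'⟩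
        exact ⟨δ⁻¹, by rw [← hδy']; simp, by rw [← hδw]; simp⟩
    have hset : (↑(A.filter (fun y => R y y')) : Set V) =
        MulAction.orbit (MulAction.stabilizer Γ x) (τ⁻¹ • w) := by
      rw [← fiber1 w y' x τ⁻¹ hρ]
      ext y
      simp only [Finset.coe_filter, Set.mem_setOf_eq]
      rw [hRiff y]
      constructor
      · rintro ⟨_, h⟩; exact h
      · intro h
        refine ⟨?_, h⟩
        obtain ⟨δ, hδw, hδy'⟩ := h
        rw [hmemA]
        refine ⟨?_, ?_, ?_⟩
        · rw [← hδw, ← hδy', hauto]; exact hadj.symm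
        · exact MulAction.mem_orbit_iff.mpr ⟨δ, hδw⟩
        · rw [← hδw, ← hδy', modular_smul, modular_symm, hmod, inv_inv]
    have hcard : (A.filter (fun y => R y y')).card = a' := by
      have hc := Set.ncard_coe_finset (A.filter (fun y => R y y'))
      rw [hset] at hc
      have h3 := aux_ncard_smul (Γ := Γ) τ⁻¹ y' w
      rw [hρ] at h3
      rw [← hc, h3]
    have hfconst : ∀ y ∈ A.filter (fun y => R y y'), f y = (b' : ℝ)⁻¹ := by
      intro y hy
      rw [Finset.mem_filter] at hy
      obtain ⟨δ, hδw, hδy'⟩ := (hRiff y).mp hy.2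
      have h3 := aux_ncard_smul (Γ := Γ) δ w y'
      rw [hδw, hδy'] at h3
      rw [hf]
      simp only
      rw [h3]
    calc ∑ y ∈ A, (if R y y' then f y else 0)
        = ∑ y ∈ A.filter (fun y => R y y'), f y := (Finset.sum_filter _ _).symm
      _ = ∑ y ∈ A.filter (fun y => R y y'), (b' : ℝ)⁻¹ := Finset.sum_congr rfl hfconst
      _ = (a' : ℝ) * (b' : ℝ)⁻¹ := by rw [Finset.sum_const, hcard, nsmul_eq_mul]
      _ = q⁻¹ := by rw [← div_eq_mul_inv]; exact hmod'
  have key : ((A.card : ℝ)) = q⁻¹ * (B.card : ℝ) := by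
    rw [← h1, ← h2, Finset.sum_comm]
  refine ⟨key, ?_⟩
  have hc : A.card = 0 ↔ B.card = 0 := by
    constructor
    · intro h
      rw [h, Nat.cast_zero] at key
      have := (mul_eq_zero.mp key.symm).resolve_left (inv_ne_zero hq')
      exact_mod_cast this
    · intro h
      rw [h, Nat.cast_zero, mul_zero] at key
      exact_mod_cast key
  rw [← Finset.card_pos, ← Finset.card_pos, Nat.pos_iff_ne_zero, Nat.pos_iff_ne_zero]
  exact not_congr hc
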